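/- arXiv:1606.07704 — 2 statements merged into one kernel-verified Lean document; each statement's English description precedes it below -/
import Mathlib

section
/- Let d ≥ 2, τ > 0, let ξ be a real random variable, and let X be a d×d random matrix whose entries are i.i.d. random variables distributed like ξ, with X almost surely invertible. Then E|(X⁻¹)_{1,1}|^τ ≤ sup_{a ∈ ℝ} E|ξ − a|^{−τ}. -/
open MeasureTheory ProbabilityTheory Matrix
open scoped ENNReal

/-- Borel-type measurable structure on matrices, via the product structure on `m → n → α`. -/
instance matrixMeasurableSpace {m n α : Type*} [MeasurableSpace α] :
    MeasurableSpace (Matrix m n α) :=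
  inferInstanceAs (MeasurableSpace (m → n → α))

/-!
Expanding `det X` along the `(0, 0)` entry gives `det X = C · (X₀₀ - a)`, where the cofactor `C`
and the shift `a` are functions of the remaining entries. Hence `(X⁻¹)₀₀ = 1 / (X₀₀ - a)`, and
since `X₀₀` is independent of the remaining entries and distributed like `ξ`, integrating first
over `X₀₀` bounds the moment by `E |ξ - a|^(-τ)` for a frozen value of `a`, hence by the supremum
over `a`.
-/

namespace Matrix

variable {n α : Type*} [DecidableEq n]

def entriesExcept (i : n) (A : Matrix n n α) : {p : n × n // p ≠ (i, i)} → α :=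
  fun p => A p.1.1 p.1.2

def ofEntriesExcept [Zero α] (i : n) (z : {p : n × n // p ≠ (i, i)} → α) : Matrix n n α :=
  of fun k l => if h : (k, l) = (i, i) then 0 else z ⟨(k, l), h⟩

theorem ofEntriesExcept_entriesExcept [Zero α] (i : n) (A : Matrix n n α) :
    ofEntriesExcept i (entriesExcept i A) = A.updateRow i (Function.update (A i) i 0) := by
  ext k l
  by_cases hk : k = i
  · subst hk
    by_cases hl : l = k <;> simp [ofEntriesExcept, entriesExcept, hl]
  · simp [ofEntriesExcept, entriesExcept, hk]

theorem continuous_ofEntriesExcept [TopologicalSpace α] [Zero α] (i : n) :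
    Continuous (ofEntriesExcept (α := α) i) :=
  continuous_matrix fun k l => by
    by_cases h : (k, l) = (i, i) <;> simp only [ofEntriesExcept, of_apply, h, dite_true,
      dite_false, continuous_const, continuous_apply]

variable [Fintype n]

theorem det_eq_mul_adjugate_add [CommRing α] (i : n) (A : Matrix n n α) :
    A.det = A i i * A.adjugate i i + (A.updateRow i (Function.update (A i) i 0)).det := by
  have hrow : A i = Function.update (A i) i 0 + A i i • Pi.single i 1 := by
    ext l
    by_cases hl : l = i <;> simp [hl]
  conv_lhs => rw [← updateRow_eq_self A i, hrow]
  rw [det_updateRow_add, det_updateRow_smul, adjugate_apply, add_comm]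

theorem adjugate_ofEntriesExcept_entriesExcept [CommRing α] (i : n) (A : Matrix n n α) :
    (ofEntriesExcept i (entriesExcept i A)).adjugate i i = A.adjugate i i := by
  rw [ofEntriesExcept_entriesExcept, adjugate_apply, adjugate_apply, updateRow_idem]

variable {K : Type*} [Field K]

/-- `det A` is affine in `A i i`, with slope `adjugate A i i` and intercept determined by the
other entries `z`; this is its root (junk `0` when the slope vanishes). -/
noncomputable def pivotShift (i : n) (z : {p : n × n // p ≠ (i, i)} → K) : K :=
  -(ofEntriesExcept i z).det / (ofEntriesExcept i z).adjugate i i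

theorem det_eq_adjugate_mul_sub_pivotShift {i : n} {A : Matrix n n K} (h : A.adjugate i i ≠ 0) :
    A.det = A.adjugate i i * (A i i - pivotShift i (entriesExcept i A)) := by
  rw [pivotShift, adjugate_ofEntriesExcept_entriesExcept, ofEntriesExcept_entriesExcept,
    det_eq_mul_adjugate_add i A]
  field_simp
  ring

theorem inv_apply_self_eq_inv_sub_pivotShift {i : n} {A : Matrix n n K}
    (h : A.adjugate i i ≠ 0) : A⁻¹ i i = (A i i - pivotShift i (entriesExcept i A))⁻¹ := by
  rw [inv_def, smul_apply, Ring.inverse_eq_inv, det_eq_adjugate_mul_sub_pivotShift h, smul_eq_mul,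
    _root_.mul_inv_rev, inv_mul_cancel_right₀ h]

theorem abs_inv_apply_self_le [LinearOrder K] [IsStrictOrderedRing K] (i : n) (A : Matrix n n K) :
    |A⁻¹ i i| ≤ |A i i - pivotShift i (entriesExcept i A)|⁻¹ := by
  by_cases h : A.adjugate i i = 0
  · simp [inv_def, h]
  · rw [inv_apply_self_eq_inv_sub_pivotShift h, abs_inv]

theorem ofReal_abs_inv_apply_self_rpow_le {τ : ℝ} (hτ : 0 < τ) (i : n) (A : Matrix n n ℝ) :
    ENNReal.ofReal |A⁻¹ i i| ^ τ ≤
      ENNReal.ofReal |A i i - pivotShift i (entriesExcept i A)| ^ (-τ) := by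
  set x := A i i - pivotShift i (entriesExcept i A)
  rcases eq_or_ne x 0 with hx | hx
  · simp [hx, ENNReal.rpow_neg, ENNReal.zero_rpow_of_pos hτ]
  · rw [ENNReal.rpow_neg, ← ENNReal.inv_rpow, ← ENNReal.ofReal_inv_of_pos (abs_pos.mpr hx)]
    gcongr
    exact abs_inv_apply_self_le i A

@[fun_prop]
theorem measurable_pivotShift (i : n) : Measurable (pivotShift (K := ℝ) i) :=
  ((continuous_ofEntriesExcept i).matrix_det.measurable.neg).div
    ((continuous_ofEntriesExcept i).matrix_adjugate.matrix_elem i i).measurable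

end Matrix

namespace ProbabilityTheory

variable {Ω : Type*} [MeasurableSpace Ω] {μ : Measure Ω}

theorem iIndepFun.indepFun_pi_ne {ι : Type*} [Fintype ι] [DecidableEq ι] {β : ι → Type*}
    [∀ i, MeasurableSpace (β i)] {f : ∀ i, Ω → β i} (hf : iIndepFun f μ)
    (hf_meas : ∀ i, Measurable (f i)) (i : ι) :
    IndepFun (f i) (fun ω (j : {j // j ≠ i}) => f j ω) μ := by
  have h := hf.indepFun_finset {i} {i}ᶜ (by simp) hf_meas
  exact h.comp (measurable_pi_apply ⟨i, Finset.mem_singleton_self i⟩)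
    (measurable_pi_lambda _ fun j : {j // j ≠ i} =>
      measurable_pi_apply (⟨j, by simpa using j.2⟩ : ({i}ᶜ : Finset ι)))

theorem lintegral_le_iSup_lintegral_of_indepFun [IsProbabilityMeasure μ] {α β : Type*}
    [MeasurableSpace α] [MeasurableSpace β] {Y : Ω → α} {Z : Ω → β} (hY : Measurable Y)
    (hZ : Measurable Z) (hYZ : IndepFun Y Z μ) {F : α → β → ℝ≥0∞}
    (hF : Measurable (Function.uncurry F)) :
    ∫⁻ ω, F (Y ω) (Z ω) ∂μ ≤ ⨆ z, ∫⁻ ω, F (Y ω) z ∂μ := by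
  have hmap : μ.map (fun ω => (Y ω, Z ω)) = (μ.map Y).prod (μ.map Z) :=
    (indepFun_iff_map_prod_eq_prod_map_map hY.aemeasurable hZ.aemeasurable).mp hYZ
  have hsection : ∀ z, ∫⁻ y, F y z ∂μ.map Y = ∫⁻ ω, F (Y ω) z ∂μ := fun z =>
    lintegral_map (hF.comp (measurable_id.prodMk measurable_const)) hY
  have : IsProbabilityMeasure (μ.map Z) := Measure.isProbabilityMeasure_map hZ.aemeasurable
  calc ∫⁻ ω, F (Y ω) (Z ω) ∂μ = ∫⁻ p, Function.uncurry F p ∂(μ.map Y).prod (μ.map Z) := by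
        rw [← hmap, lintegral_map hF (hY.prodMk hZ)]
        rfl
    _ = ∫⁻ z, ∫⁻ y, F y z ∂μ.map Y ∂μ.map Z := lintegral_prod_symm _ hF.aemeasurable
    _ ≤ ∫⁻ _, ⨆ z, ∫⁻ ω, F (Y ω) z ∂μ ∂μ.map Z :=
        lintegral_mono fun z => (hsection z).trans_le (le_iSup (fun z => ∫⁻ ω, F (Y ω) z ∂μ) z)
    _ = ⨆ z, ∫⁻ ω, F (Y ω) z ∂μ := by simp

end ProbabilityTheory

theorem inverse_entry_negative_moment_le
    {Ω : Type*} [MeasureSpace Ω] [IsProbabilityMeasure (ℙ : Measure Ω)]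
    {d : ℕ} (hd : 2 ≤ d) (τ : ℝ) (hτ : 0 < τ)
    (ξ : Ω → ℝ) (hξ : Measurable ξ)
    (X : Ω → Matrix (Fin d) (Fin d) ℝ) (hX : Measurable X)
    -- the entries of `X` are i.i.d., distributed like `ξ`
    (hent : ∀ i j, Measure.map (fun ω => X ω i j) ℙ = Measure.map ξ ℙ)
    (hiid : iIndepFun
      (fun q : Fin d × Fin d => fun ω => X ω q.1 q.2) ℙ) :
    (∫⁻ ω, (ENNReal.ofReal |(X ω)⁻¹ ⟨0, by omega⟩ ⟨0, by omega⟩|) ^ τ ∂ℙ) ≤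
      ⨆ a : ℝ, ∫⁻ ω, (ENNReal.ofReal |ξ ω - a|) ^ (-τ) ∂ℙ := by
  set i₀ : Fin d := ⟨0, by omega⟩
  have hentry (q : Fin d × Fin d) : Measurable fun ω => X ω q.1 q.2 :=
    (measurable_pi_apply q.2).comp ((measurable_pi_apply q.1).comp hX)
  have hrest : Measurable fun ω => entriesExcept i₀ (X ω) :=
    measurable_pi_lambda _ fun q => hentry q.1
  have hindep : IndepFun (fun ω => X ω i₀ i₀) (fun ω => entriesExcept i₀ (X ω)) ℙ :=
    hiid.indepFun_pi_ne hentry (i₀, i₀)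
  have hlaw : IdentDistrib (fun ω => X ω i₀ i₀) ξ ℙ ℙ :=
    ⟨(hentry (i₀, i₀)).aemeasurable, hξ.aemeasurable, hent i₀ i₀⟩
  calc ∫⁻ ω, ENNReal.ofReal |(X ω)⁻¹ i₀ i₀| ^ τ ∂ℙ
      ≤ ∫⁻ ω, ENNReal.ofReal |X ω i₀ i₀ - pivotShift i₀ (entriesExcept i₀ (X ω))| ^ (-τ) ∂ℙ :=
        lintegral_mono fun ω => ofReal_abs_inv_apply_self_rpow_le hτ i₀ (X ω)
    _ ≤ ⨆ z, ∫⁻ ω, ENNReal.ofReal |X ω i₀ i₀ - pivotShift i₀ z| ^ (-τ) ∂ℙ :=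
        lintegral_le_iSup_lintegral_of_indepFun (hentry (i₀, i₀)) hrest hindep
          (F := fun y z => ENNReal.ofReal |y - pivotShift i₀ z| ^ (-τ)) (by fun_prop)
    _ ≤ ⨆ a, ∫⁻ ω, ENNReal.ofReal |ξ ω - a| ^ (-τ) ∂ℙ :=
        iSup_mono' fun z => ⟨pivotShift i₀ z, (hlaw.comp
          (u := fun y => ENNReal.ofReal |y - pivotShift i₀ z| ^ (-τ)) (by fun_prop)).lintegral_eq.le⟩
end

section
/- Let 0 < ε_1 < ε and 0 < r < 1, and for n ≥ 1 set b_n = √(1 − e^{−2 n^r ε}) and a_n = √(1 − e^{−2 n^r ε_1}). Then 0 ≤ a_n < b_n ≤ 1 for all n ≥ 1, lim_{n→∞} (b_n − a_n)^{1/n} = 1, and Σ_{n=1}^∞ (1 − a_n²)^{β/2} < ∞ for every β > 0. -/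
/-!
Put `g t = √(1 - e^{-t})`, so that `a n = g (2 n^r ε₁)` and `b n = g (2 n^r ε)`; `g` is strictly
increasing on `[0, ∞)` with values in `[0, 1]`. Since `b² - a² = e^{-2n^rε₁} - e^{-2n^rε}` is at least
`2(ε - ε₁) n^r e^{-2n^rε}` by convexity of `exp`, and `a + b ≤ 2`, the gap `b n - a n` lies between
`(ε - ε₁) n^r e^{-2n^rε}` and `1`. Both bounds have `n`-th root tending to `1` because `n^r = o(n)`.
Finally `(1 - a n²)^{β/2} = e^{-βε₁n^r}`, which is `O(n⁻²)`.
-/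

open Filter Real Topology

lemma sqrt_one_sub_exp_neg_le_one (t : ℝ) : √(1 - exp (-t)) ≤ 1 :=
  sqrt_le_one.mpr (by linarith [exp_pos (-t)])

lemma sqrt_one_sub_exp_neg_lt {s t : ℝ} (hs : 0 ≤ s) (hst : s < t) :
    √(1 - exp (-s)) < √(1 - exp (-t)) :=
  sqrt_lt_sqrt (by linarith [exp_le_one_iff.mpr (neg_nonpos.mpr hs)])
    (by linarith [exp_lt_exp.mpr (neg_lt_neg hst)])

lemma sub_mul_exp_neg_le_exp_neg_sub_exp_neg (s t : ℝ) :
    (t - s) * exp (-t) ≤ exp (-s) - exp (-t) := by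
  have hsplit : exp (-s) = exp (t - s) * exp (-t) := by rw [← exp_add]; ring_nf
  nlinarith [add_one_le_exp (t - s), exp_pos (-t)]

lemma sub_mul_exp_neg_le_sqrt_sub_sqrt {s t : ℝ} (hs : 0 ≤ s) (hst : s < t) :
    (t - s) * exp (-t) / 2 ≤ √(1 - exp (-t)) - √(1 - exp (-s)) := by
  set u := √(1 - exp (-s))
  set v := √(1 - exp (-t))
  have hu : u ^ 2 = 1 - exp (-s) := sq_sqrt (by linarith [exp_le_one_iff.mpr (neg_nonpos.mpr hs)])
  have hv : v ^ 2 = 1 - exp (-t) :=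
    sq_sqrt (by linarith [exp_le_one_iff.mpr (neg_nonpos.mpr (hs.trans hst.le))])
  have huv : u ≤ v := (sqrt_one_sub_exp_neg_lt hs hst).le
  have hv1 : v ≤ 1 := sqrt_one_sub_exp_neg_le_one t
  have hgap := sub_mul_exp_neg_le_exp_neg_sub_exp_neg s t
  nlinarith [sqrt_nonneg (1 - exp (-s))]

lemma one_sub_sq_sqrt_one_sub_exp_neg_rpow {t : ℝ} (ht : 0 ≤ t) (p : ℝ) :
    (1 - √(1 - exp (-t)) ^ 2) ^ p = exp (-(p * t)) := by
  rw [sq_sqrt (by linarith [exp_le_one_iff.mpr (neg_nonpos.mpr ht)]), sub_sub_cancel,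
    ← exp_mul]
  ring_nf

lemma tendsto_rpow_one_div_natCast_of_tendsto_log_div {x : ℕ → ℝ}
    (hx : ∀ᶠ n in atTop, 0 < x n) (h : Tendsto (fun n : ℕ => log (x n) / n) atTop (𝓝 0)) :
    Tendsto (fun n : ℕ => x n ^ (1 / (n : ℝ))) atTop (𝓝 1) := by
  have hexp := (continuous_exp.tendsto 0).comp h
  rw [exp_zero] at hexp
  refine hexp.congr' ?_
  filter_upwards [hx] with n hn
  rw [Function.comp_apply, rpow_def_of_pos hn, mul_one_div]

lemma tendsto_rpow_div_natCast {r : ℝ} (hr : r < 1) :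
    Tendsto (fun n : ℕ => (n : ℝ) ^ r / n) atTop (𝓝 0) := by
  refine ((tendsto_rpow_neg_atTop (sub_pos.mpr hr)).comp tendsto_natCast_atTop_atTop).congr' ?_
  filter_upwards [eventually_ge_atTop 1] with n hn
  rw [Function.comp_apply, neg_sub, rpow_sub_one (by positivity)]

lemma tendsto_mul_rpow_mul_exp_rpow_one_div {c k r : ℝ} (hc : 0 < c) (hr : r < 1) :
    Tendsto (fun n : ℕ => (c * (n : ℝ) ^ r * exp (-k * (n : ℝ) ^ r)) ^ (1 / (n : ℝ)))
      atTop (𝓝 1) := by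
  apply tendsto_rpow_one_div_natCast_of_tendsto_log_div
  · filter_upwards [eventually_ge_atTop 1] with n hn
    have : (0 : ℝ) < n := by exact_mod_cast hn
    positivity
  have hlog : Tendsto (fun n : ℕ => log c / n + r * (log n / n) - k * ((n : ℝ) ^ r / n))
      atTop (𝓝 0) := by
    have hlog_div : Tendsto (fun n : ℕ => log (n : ℝ) / n) atTop (𝓝 0) :=
      isLittleO_log_id_atTop.tendsto_div_nhds_zero.comp tendsto_natCast_atTop_atTop
    simpa using ((tendsto_const_div_atTop_nhds_zero_nat (log c)).add
      (hlog_div.const_mul r)).sub ((tendsto_rpow_div_natCast hr).const_mul k)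
  refine hlog.congr' ?_
  filter_upwards [eventually_ge_atTop 1] with n hn
  have hn0 : (0 : ℝ) < n := by exact_mod_cast hn
  rw [log_mul (by positivity) (exp_ne_zero _), log_mul hc.ne' (by positivity), log_rpow hn0,
    log_exp]
  ring

lemma tendsto_rpow_one_div_natCast_of_le {x L : ℕ → ℝ}
    (hL : Tendsto (fun n : ℕ => L n ^ (1 / (n : ℝ))) atTop (𝓝 1))
    (hLx : ∀ᶠ n in atTop, 0 ≤ L n ∧ L n ≤ x n ∧ x n ≤ 1) :
    Tendsto (fun n : ℕ => x n ^ (1 / (n : ℝ))) atTop (𝓝 1) := by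
  refine tendsto_of_tendsto_of_tendsto_of_le_of_le' hL tendsto_const_nhds ?_ ?_
  · filter_upwards [hLx] with n ⟨hL0, hle, _⟩
    exact rpow_le_rpow hL0 hle (by positivity)
  · filter_upwards [hLx] with n ⟨hL0, hle, hx1⟩
    exact rpow_le_one (hL0.trans hle) hx1 (by positivity)

lemma summable_exp_neg_mul_rpow {c r : ℝ} (hc : 0 < c) (hr : 0 < r) :
    Summable fun n : ℕ => exp (-c * (n : ℝ) ^ r) := by
  have hlittleO := (isLittleO_exp_neg_mul_rpow_atTop hc (-2 / r)).comp_tendsto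
    ((tendsto_rpow_atTop hr).comp tendsto_natCast_atTop_atTop)
  refine summable_of_isBigO_nat (summable_nat_rpow.mpr (by norm_num : (-2 : ℝ) < -1))
    (hlittleO.isBigO.congr_right fun n => ?_)
  rw [Function.comp_apply, Function.comp_apply, ← rpow_mul (Nat.cast_nonneg n),
    mul_div_cancel₀ _ hr.ne']

theorem sequences_a_b_properties
    (ε ε₁ r : ℝ) (hε₁ : 0 < ε₁) (hε : ε₁ < ε) (hr0 : 0 < r) (hr1 : r < 1)
    (a b : ℕ → ℝ)
    (ha : ∀ n : ℕ, a n = Real.sqrt (1 - Real.exp (-2 * (n : ℝ) ^ r * ε₁)))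
    (hb : ∀ n : ℕ, b n = Real.sqrt (1 - Real.exp (-2 * (n : ℝ) ^ r * ε))) :
    (∀ n : ℕ, 1 ≤ n → 0 ≤ a n ∧ a n < b n ∧ b n ≤ 1) ∧
    Tendsto (fun n : ℕ => (b n - a n) ^ (1 / (n : ℝ))) atTop (nhds 1) ∧
    ∀ β : ℝ, 0 < β → Summable (fun n : ℕ => (1 - a n ^ 2) ^ (β / 2)) := by
  simp only [neg_mul] at ha hb
  have hlt : ∀ n : ℕ, 1 ≤ n → 2 * (n : ℝ) ^ r * ε₁ < 2 * (n : ℝ) ^ r * ε := fun n hn => by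
    have : (0 : ℝ) < n := by exact_mod_cast hn
    gcongr
  have hbounds : ∀ n : ℕ, 1 ≤ n → 0 ≤ a n ∧ a n < b n ∧ b n ≤ 1 := fun n hn => by
    rw [ha, hb]
    exact ⟨sqrt_nonneg _, sqrt_one_sub_exp_neg_lt (by positivity) (hlt n hn),
      sqrt_one_sub_exp_neg_le_one _⟩
  refine ⟨hbounds, ?_, fun β hβ => ?_⟩
  · refine tendsto_rpow_one_div_natCast_of_le
      (tendsto_mul_rpow_mul_exp_rpow_one_div (k := 2 * ε) (sub_pos.mpr hε) hr1) ?_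
    filter_upwards [eventually_ge_atTop 1] with n hn
    obtain ⟨ha0, hab, hb1⟩ := hbounds n hn
    have hgap := sub_mul_exp_neg_le_sqrt_sub_sqrt (by positivity) (hlt n hn)
    rw [← ha, ← hb] at hgap
    refine ⟨by positivity, le_of_eq_of_le ?_ hgap, by linarith⟩
    ring_nf
  · refine (summable_exp_neg_mul_rpow (mul_pos hβ hε₁) hr0).congr fun n => ?_
    rw [ha, one_sub_sq_sqrt_one_sub_exp_neg_rpow (by positivity)]
    ring_nf
end
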